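/- arXiv:2210.07366 — 3 statements merged into one kernel-verified Lean document; each statement's English description precedes it below -/
import Mathlib

section
/- Define the sequence H : ℕ → ℤ by H(0) = 1, H(1) = 1, and H(q) = 17·H(q−1) − H(q−2) − 3 for q ≥ 2. Then H(q) > 0 for all q, and the ratio H(q)/H(q−1) converges, with limit lim_{q→∞} H(q)/H(q−1) = (17 + √285)/2. -/
open Filter Topology

/-- H(q) = m_{(q−1)/q}: H(0) = 1, H(1) = 1, H(q) = 17·H(q−1) − H(q−2) − 3. -/
def H : ℕ → ℤ
  | 0 => 1
  | 1 => 1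
  | (n + 2) => 17 * H (n + 1) - H n - 3

/-!
Shifting by the fixed point 1/5 of the recurrence, `5 H(q) - 1` satisfies the homogeneous
recurrence `x(q+2) = 17 x(q+1) - x(q)`, whose characteristic roots `α, β = (17 ± √285)/2`
satisfy `0 < β < 1 < α`. By Binet's formula `H(q) / α^q` converges to a nonzero limit,
and then `H(q+1) / H(q) → α`.
-/

section LinearRecurrence

variable {K : Type*} [Field K] {u : ℕ → K} {α β : K}

theorem sub_mul_eq_pow_mul_of_rec (h : ∀ n, u (n + 2) = (α + β) * u (n + 1) - α * β * u n)
    (n : ℕ) : u (n + 1) - β * u n = α ^ n * (u 1 - β * u 0) := by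
  induction n with
  | zero => ring
  | succ n ih => rw [h, pow_succ]; linear_combination α * ih

theorem sub_mul_eq_binet_of_rec (h : ∀ n, u (n + 2) = (α + β) * u (n + 1) - α * β * u n)
    (n : ℕ) : (α - β) * u n = α ^ n * (u 1 - β * u 0) - β ^ n * (u 1 - α * u 0) := by
  have h' : ∀ n, u (n + 2) = (β + α) * u (n + 1) - β * α * u n := fun n => by
    rw [h, add_comm, mul_comm α]
  linear_combination sub_mul_eq_pow_mul_of_rec h n - sub_mul_eq_pow_mul_of_rec h' n

end LinearRecurrence

theorem tendsto_div_pow_of_rec {u : ℕ → ℝ} {α β : ℝ} (hβα : |β| < |α|)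
    (h : ∀ n, u (n + 2) = (α + β) * u (n + 1) - α * β * u n) :
    Tendsto (fun n => u n / α ^ n) atTop (𝓝 ((u 1 - β * u 0) / (α - β))) := by
  have hα : α ≠ 0 := abs_pos.mp ((abs_nonneg β).trans_lt hβα)
  have hαβ : α - β ≠ 0 := sub_ne_zero.mpr fun e => by simp [e] at hβα
  have hratio : Tendsto (fun n => (β / α) ^ n) atTop (𝓝 0) := by
    apply tendsto_pow_atTop_nhds_zero_of_abs_lt_one
    rwa [abs_div, div_lt_one (abs_pos.mpr hα)]
  have hform : ∀ n, u n / α ^ n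
      = ((u 1 - β * u 0) - (β / α) ^ n * (u 1 - α * u 0)) / (α - β) := fun n => by
    rw [eq_div_iff hαβ, div_pow, mul_comm, ← mul_div_assoc, sub_mul_eq_binet_of_rec h n]
    field_simp
  simp_rw [hform]
  simpa using ((hratio.mul_const (u 1 - α * u 0)).const_sub (u 1 - β * u 0)).div_const (α - β)

theorem tendsto_succ_div_of_tendsto_div_pow {x : ℕ → ℝ} {α A : ℝ} (hA : A ≠ 0)
    (h : Tendsto (fun n => x n / α ^ n) atTop (𝓝 A)) :
    Tendsto (fun n => x (n + 1) / x n) atTop (𝓝 α) := by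
  by_cases hα : α = 0
  · have h0 : Tendsto (fun n => x n / α ^ n) atTop (𝓝 0) :=
      tendsto_const_nhds.congr' (eventually_atTop.2 ⟨1, fun n hn => by
        simp [hα, zero_pow (Nat.one_le_iff_ne_zero.mp hn)]⟩)
    exact absurd (tendsto_nhds_unique h h0) hA
  -- also true when `x n = 0`, both sides then being `0`
  have hform : ∀ n, x (n + 1) / x n = α * (x (n + 1) / α ^ (n + 1)) / (x n / α ^ n) :=
    fun n => by
      rw [pow_succ]
      field_simp
  simp_rw [hform]
  have hlim := ((h.comp (tendsto_add_atTop_nat 1)).const_mul α).div h hA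
  rwa [mul_div_cancel_right₀ _ hA] at hlim

theorem one_le_H_and_H_le_H_succ (n : ℕ) : 1 ≤ H n ∧ H n ≤ H (n + 1) := by
  induction n with
  | zero => decide
  | succ n ih =>
    refine ⟨ih.1.trans ih.2, ?_⟩
    change H (n + 1) ≤ 17 * H (n + 1) - H n - 3
    omega

theorem exists_tendsto_H_div_pow : ∃ A ≠ 0,
    Tendsto (fun n => (H n : ℝ) / ((17 + Real.sqrt 285) / 2) ^ n) atTop (𝓝 A) := by
  set α := (17 + Real.sqrt 285) / 2 with hα
  set β := (17 - Real.sqrt 285) / 2 with hβ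
  have hsq : Real.sqrt 285 ^ 2 = 285 := Real.sq_sqrt (by norm_num)
  have hlo : 15 < Real.sqrt 285 := by nlinarith [Real.sqrt_nonneg 285]
  have hhi : Real.sqrt 285 < 17 := by nlinarith [Real.sqrt_nonneg 285]
  have hβα : |β| < |α| := by
    rw [abs_of_pos (by linarith), abs_of_pos (by linarith)]; linarith
  have hrec : ∀ n, (5 * H (n + 2) - 1 : ℝ)
      = (α + β) * (5 * H (n + 1) - 1) - α * β * (5 * H n - 1) := fun n => by
    rw [show H (n + 2) = 17 * H (n + 1) - H n - 3 from rfl]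
    push_cast
    linear_combination -(5 * H n - 1 : ℝ) / 4 * hsq
  have hpow : Tendsto (fun n => (1 / α) ^ n) atTop (𝓝 0) :=
    tendsto_pow_atTop_nhds_zero_of_lt_one (by positivity)
      ((div_lt_one (by linarith)).mpr (by linarith))
  have hu := tendsto_div_pow_of_rec (u := fun n => 5 * (H n : ℝ) - 1) hβα hrec
  refine ⟨_, ?_, ((hu.add hpow).div_const 5).congr fun n => ?_⟩
  · norm_num [H]
    constructor <;> intro h <;> linarith
  · rw [one_div_pow]
    field_simp
    ring

/-- All H(q) are positive, and H(q)/H(q−1) → (17 + √285)/2 as q → ∞. -/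
theorem gen_markov_q_minus_one_over_q_ratio_limit :
    (∀ q, 0 < H q) ∧
    Tendsto (fun q : ℕ => (H (q + 1) : ℝ) / (H q : ℝ)) atTop
      (𝓝 ((17 + Real.sqrt 285) / 2)) := by
  obtain ⟨A, hA, hlim⟩ := exists_tendsto_H_div_pow
  exact ⟨fun q => (one_le_H_and_H_le_H_succ q).1, tendsto_succ_div_of_tendsto_div_pow hA hlim⟩
end

section
/- Define the sequence H : ℕ → ℤ by H(0) = 1, H(1) = 1, and H(q) = 17·H(q−1) − H(q−2) − 3 for q ≥ 2. Then for every k ≥ 0, the continuant of the sequence consisting of k copies of the block (3,5), followed by the entries 3, 5, 4, 3, followed by k copies of the block (5,3), equals H(2k+3). (For example, k = 0 gives K(3,5,4,3) = 217 = H(3).) -/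
/-- The continuant: K [] = 1, K [a] = a, K (a::b::t) = a·K(b::t) + K t. -/
def continuant : List ℤ → ℤ
  | [] => 1
  | [a] => a
  | a :: b :: t => a * continuant (b :: t) + continuant t

/-- Pair (continuant L, continuant of tail-ish) computed by a single-step recursion. -/
def Kp : List ℤ → ℤ × ℤ
  | [] => (1, 0)
  | a :: t => (a * (Kp t).1 + (Kp t).2, (Kp t).1)

lemma continuant_eq_Kp : ∀ L : List ℤ, continuant L = (Kp L).1 := by
  intro L
  induction L using continuant.induct with
  | case1 => simp [continuant, Kp]
  | case2 a => simp [continuant, Kp]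
  | case3 a b t ih1 ih2 =>
      simp only [continuant, Kp, ih1, ih2]

/-- Matrix product associated to a list. -/
def Km : List ℤ → Matrix (Fin 2) (Fin 2) ℤ
  | [] => 1
  | a :: t => !![a, 1; 1, 0] * Km t

lemma Km_append : ∀ X Y : List ℤ, Km (X ++ Y) = Km X * Km Y := by
  intro X Y
  induction X with
  | nil => simp [Km]
  | cons a t ih => simp [Km, ih, Matrix.mul_assoc]

lemma Km_entries : ∀ L : List ℤ, Km L 0 0 = (Kp L).1 ∧ Km L 1 0 = (Kp L).2 := by
  intro L
  induction L with
  | nil => simp [Km, Kp, Matrix.one_apply]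
  | cons a t ih =>
      obtain ⟨h1, h2⟩ := ih
      constructor <;>
        simp [Km, Kp, Matrix.mul_apply, Fin.sum_univ_two, h1, h2]

lemma continuant_eq_Km (L : List ℤ) : continuant L = Km L 0 0 := by
  rw [continuant_eq_Kp, (Km_entries L).1]

lemma Km_replicate (a b : ℤ) : ∀ k : ℕ,
    Km ((List.replicate k [a, b]).flatten) = (Km [a, b]) ^ k := by
  intro k
  induction k with
  | zero => simp [Km]
  | succ n ih =>
      rw [List.replicate_succ, List.flatten_cons, Km_append, ih, pow_succ']

lemma H_step (n : ℕ) : H (n + 2) = 17 * H (n + 1) - H n - 3 := by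
  simp [H]

lemma key : ∀ k : ℕ, ∃ x y : ℤ,
    Km ((List.replicate k [(3 : ℤ), 5]).flatten ++ [3, 5, 4, 3]
        ++ (List.replicate k [(5 : ℤ), 3]).flatten)
      = !![H (2 * k + 3), x; x + 1, y]
      ∧ 3 * x = H (2 * k + 3) - H (2 * k + 2) - 3
      ∧ 3 * y = 5 * H (2 * k + 2) - 2 := by
  intro k
  induction k with
  | zero =>
      refine ⟨67, 21, ?_, ?_, ?_⟩
      · show Km ([3, 5, 4, 3]) = _
        have h3 : H 3 = 217 := by norm_num [H]
        simp only [Km]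
        rw [h3]
        norm_num [Matrix.mul_fin_two]
      · norm_num [H]
      · norm_num [H]
  | succ n ih =>
      obtain ⟨x, y, hM, hx, hy⟩ := ih
      have hsplit :
          (List.replicate (n + 1) [(3 : ℤ), 5]).flatten ++ [3, 5, 4, 3]
              ++ (List.replicate (n + 1) [(5 : ℤ), 3]).flatten
            = ([3, 5] ++ ((List.replicate n [(3 : ℤ), 5]).flatten ++ [3, 5, 4, 3]
                ++ (List.replicate n [(5 : ℤ), 3]).flatten)) ++ [5, 3] := by
        rw [List.replicate_succ, List.replicate_succ']
        simp
      have hKm35 : Km [3, 5] = !![(16 : ℤ), 3; 5, 1] := by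
        simp only [Km]
        norm_num [Matrix.mul_fin_two]
      have hKm53 : Km [5, 3] = !![(16 : ℤ), 5; 3, 1] := by
        simp only [Km]
        norm_num [Matrix.mul_fin_two]
      set a := H (2 * n + 3) with ha
      set b := H (2 * n + 2) with hb
      have h4 : H (2 * n + 4) = 17 * a - b - 3 := H_step (2 * n + 2)
      have h5 : H (2 * n + 5) = 17 * H (2 * n + 4) - a - 3 := H_step (2 * n + 3)
      have hidx : 2 * (n + 1) + 3 = 2 * n + 5 := by ring
      have hidx2 : 2 * (n + 1) + 2 = 2 * n + 4 := by ring
      refine ⟨80 * a + 31 * x + 3 * y + 15, 25 * a + 10 * x + y + 5, ?_, ?_, ?_⟩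
      · rw [hsplit, Km_append, Km_append, hM, hKm35, hKm53, hidx]
        rw [Matrix.mul_fin_two, Matrix.mul_fin_two]
        ext i j
        fin_cases i <;> fin_cases j <;> simp <;> linarith
      · rw [hidx, hidx2, h5, h4]
        linarith
      · rw [hidx2, h4]
        linarith

/-- K((3,5)^k, 3, 5, 4, 3, (5,3)^k) = H(2k+3) for every k ≥ 0. -/
theorem continuant_q_minus_one_over_odd_q (k : ℕ) :
    continuant
      ((List.replicate k [(3 : ℤ), 5]).flatten ++ [3, 5, 4, 3]
        ++ (List.replicate k [(5 : ℤ), 3]).flatten)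
      = H (2 * k + 3) := by
  obtain ⟨x, y, hM, -, -⟩ := key k
  rw [continuant_eq_Km, hM]
  simp
end

section
/- Let x₁, x₂, x₃ be positive real numbers and set δ = x₁ + x₂ + x₃. Define the sequence L′₁, L′₂, L′₃, … of positive reals by L′₁ = (x₃δ + x₁x₂)/(x₁x₂), and for i ≥ 1, L′_{2i} = (x₂²/x₁²)^{i−1}·(x₂/x₁) and L′_{2i+1} = (x₁²/x₂²)^{i−1}·(δx₁x₃/x₂³). Then the infinite continued fraction [L′₁, L′₂, L′₃, …] converges, and its value is (δx₃ + x₁² + 2x₁x₂ − x₂² + √((x₁² − x₂² − δx₃)² + 4x₁²x₃δ))/(2x₁x₂). -/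
open Filter Topology

/-- Finite continued fraction [c₁,…,cₙ] = c₁ + 1/(c₂ + 1/(⋯ + 1/cₙ)). -/
noncomputable def cfrac : List ℝ → ℝ
  | [] => 0
  | [a] => a
  | a :: b :: t => a + (cfrac (b :: t))⁻¹

/-- Alternating scaling of a list. -/
noncomputable def altscale (μ : ℝ) : List ℝ → List ℝ
  | [] => []
  | a :: t => μ * a :: altscale μ⁻¹ t

lemma cfrac_altscale (l : List ℝ) : ∀ μ : ℝ, μ ≠ 0 →
    cfrac (altscale μ l) = μ * cfrac l := by
  induction l with
  | nil => intro μ _; simp [altscale, cfrac]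
  | cons a t ih =>
    intro μ hμ
    match t with
    | [] => simp [altscale, cfrac]
    | b :: t' =>
      have h := ih μ⁻¹ (inv_ne_zero hμ)
      have e1 : altscale μ (a :: b :: t') = μ * a :: altscale μ⁻¹ (b :: t') := rfl
      have e2 : altscale μ⁻¹ (b :: t') = μ⁻¹ * b :: altscale μ⁻¹⁻¹ t' := rfl
      rw [e1, e2, cfrac, ← e2, h, cfrac]
      rw [mul_inv, inv_inv, mul_add]

section AbstractCF

variable {a b r : ℝ} (ha : 0 < a) (hb : 0 < b) (hr : 0 < r)

noncomputable def fmap (a b r t : ℝ) : ℝ := a + (b + (r * t)⁻¹)⁻¹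

noncomputable def tstar (a b r : ℝ) : ℝ :=
  (a * b * r + r - 1 + Real.sqrt ((a * b * r + r - 1) ^ 2 + 4 * (a * b * r))) / (2 * (b * r))

include ha hb hr

lemma tstar_pos : 0 < tstar a b r := by
  have hD : (0:ℝ) ≤ (a * b * r + r - 1) ^ 2 + 4 * (a * b * r) := by positivity
  have hs := Real.sq_sqrt hD
  have hs0 := Real.sqrt_nonneg ((a * b * r + r - 1) ^ 2 + 4 * (a * b * r))
  have habr : 0 < a * b * r := by positivity
  have hnum : 0 < a * b * r + r - 1 + Real.sqrt ((a * b * r + r - 1) ^ 2 + 4 * (a * b * r)) := by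
    nlinarith [sq_nonneg (Real.sqrt ((a * b * r + r - 1) ^ 2 + 4 * (a * b * r)) + (a * b * r + r - 1))]
  exact div_pos hnum (by positivity)

lemma tstar_quad : b * r * (tstar a b r) ^ 2 - (a * b * r + r - 1) * tstar a b r - a = 0 := by
  have hD : (0:ℝ) ≤ (a * b * r + r - 1) ^ 2 + 4 * (a * b * r) := by positivity
  have hs := Real.sq_sqrt hD
  have hbr : (2 * (b * r)) ≠ 0 := by positivity
  set s := Real.sqrt ((a * b * r + r - 1) ^ 2 + 4 * (a * b * r)) with hsdef
  have hs2 : s ^ 2 = (a * b * r + r - 1) ^ 2 + 4 * (a * b * r) := Real.sq_sqrt hD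
  rw [tstar, ← hsdef]
  have hbr : (2 * (b * r)) ≠ 0 := by positivity
  field_simp
  nlinarith [hs2]

lemma fmap_pos {t : ℝ} (ht : 0 ≤ t) : 0 < fmap a b r t := by
  rw [fmap]
  have h1 : 0 ≤ (r * t)⁻¹ := by positivity
  have h2 : 0 < b + (r * t)⁻¹ := by linarith
  positivity

lemma fmap_eq {t : ℝ} (ht : 0 < t) :
    fmap a b r t = ((a * b * r + r) * t + a) / (b * r * t + 1) := by
  have h1 : 0 < (r * t) := by positivity
  have h2 : 0 < b + (r * t)⁻¹ := by positivity
  have h3 : 0 < b * r * t + 1 := by positivity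
  rw [fmap]
  field_simp
  ring

lemma fmap_strictMono {t t' : ℝ} (ht : 0 < t) (htt' : t < t') :
    fmap a b r t < fmap a b r t' := by
  have ht' : 0 < t' := lt_trans ht htt'
  rw [fmap_eq ha hb hr ht, fmap_eq ha hb hr ht']
  rw [div_lt_div_iff₀ (by positivity) (by positivity)]
  nlinarith [mul_pos (mul_pos hb hr) (sub_pos.2 htt')]

lemma fmap_fixed : fmap a b r (tstar a b r) = tstar a b r := by
  have ht := tstar_pos ha hb hr
  have hq := tstar_quad ha hb hr
  rw [fmap_eq ha hb hr ht, div_eq_iff (by positivity)]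
  ring_nf
  ring_nf at hq
  linarith

lemma fixed_unique {ℓ : ℝ} (hl : 0 < ℓ) (hfix : fmap a b r ℓ = ℓ) : ℓ = tstar a b r := by
  have ht := tstar_pos ha hb hr
  have hq := tstar_quad ha hb hr
  have hql : b * r * ℓ ^ 2 - (a * b * r + r - 1) * ℓ - a = 0 := by
    rw [fmap_eq ha hb hr hl, div_eq_iff (by positivity)] at hfix
    nlinarith [hfix]
  have key : (ℓ - tstar a b r) * (b * r * (ℓ + tstar a b r) - (a * b * r + r - 1)) = 0 := by
    linear_combination hql - hq
  rcases mul_eq_zero.1 key with h | h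
  · linarith [sub_eq_zero.1 h]
  · exfalso
    nlinarith [mul_pos (mul_pos hb hr) (mul_pos hl ht)]

lemma fmap_gt {t : ℝ} (h0 : 0 < t) (hlt : t < tstar a b r) : t < fmap a b r t := by
  have hq := tstar_quad ha hb hr
  have ht := tstar_pos ha hb hr
  rw [fmap_eq ha hb hr h0, lt_div_iff₀ (by positivity)]
  nlinarith [hq, mul_pos ht h0,
    mul_pos (sub_pos.2 hlt) (show (0:ℝ) < b * r * (t * tstar a b r) + a by positivity)]

lemma fmap_lt {t : ℝ} (hgt : tstar a b r < t) : fmap a b r t < t := by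
  have ht := tstar_pos ha hb hr
  have h0 : 0 < t := lt_trans ht hgt
  have hq := tstar_quad ha hb hr
  rw [fmap_eq ha hb hr h0, div_lt_iff₀ (by positivity)]
  nlinarith [hq, mul_pos ht h0,
    mul_pos (sub_pos.2 hgt) (show (0:ℝ) < b * r * (t * tstar a b r) + a by positivity)]

lemma fmap_mono {t t' : ℝ} (ht : 0 < t) (htt' : t ≤ t') :
    fmap a b r t ≤ fmap a b r t' := by
  rcases eq_or_lt_of_le htt' with h | h
  · rw [h]
  · exact le_of_lt (fmap_strictMono ha hb hr ht h)

lemma fixed_of_lim {x : ℕ → ℝ} {ℓ : ℝ} (hl : 0 < ℓ)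
    (hxs : ∀ k, x (k + 1) = fmap a b r (x k))
    (hlim : Tendsto x atTop (𝓝 ℓ)) : fmap a b r ℓ = ℓ := by
  have hcont : ContinuousAt (fmap a b r) ℓ := by
    have h1 : r * ℓ ≠ 0 := by positivity
    have h2 : b + (r * ℓ)⁻¹ ≠ 0 := by positivity
    show ContinuousAt (fun t => a + (b + (r * t)⁻¹)⁻¹) ℓ
    exact continuousAt_const.add
      ((continuousAt_const.add ((continuousAt_const.mul continuousAt_id).inv₀ h1)).inv₀ h2)
  have h1 : Tendsto (fun k => x (k + 1)) atTop (𝓝 ℓ) :=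
    hlim.comp (tendsto_add_atTop_nat 1)
  have h2 : Tendsto (fun k => fmap a b r (x k)) atTop (𝓝 (fmap a b r ℓ)) :=
    hcont.tendsto.comp hlim
  exact tendsto_nhds_unique h2 (by simpa only [← hxs] using h1)

lemma iter_tendsto {t₀ : ℝ} (ht₀ : 0 < t₀) :
    Tendsto (fun k => (fmap a b r)^[k] t₀) atTop (𝓝 (tstar a b r)) := by
  have ht := tstar_pos ha hb hr
  set x := fun k => (fmap a b r)^[k] t₀ with hx
  have hxs : ∀ k, x (k + 1) = fmap a b r (x k) := fun k =>
    Function.iterate_succ_apply' (fmap a b r) k t₀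
  rcases lt_trichotomy t₀ (tstar a b r) with hc | hc | hc
  · -- increasing case
    have hinv : ∀ k, 0 < x k ∧ x k < tstar a b r := by
      intro k
      induction k with
      | zero => exact ⟨ht₀, hc⟩
      | succ n ih =>
        rw [hxs]
        refine ⟨fmap_pos ha hb hr ih.1.le, ?_⟩
        calc fmap a b r (x n) < fmap a b r (tstar a b r) :=
              fmap_strictMono ha hb hr ih.1 ih.2
          _ = tstar a b r := fmap_fixed ha hb hr
    have hmono : Monotone x := monotone_nat_of_le_succ fun n => by
      rw [hxs]; exact (fmap_gt ha hb hr (hinv n).1 (hinv n).2).le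
    have hbdd : BddAbove (Set.range x) := ⟨tstar a b r, by
      rintro _ ⟨k, rfl⟩; exact (hinv k).2.le⟩
    have hlim := tendsto_atTop_ciSup hmono hbdd
    have hl0 : 0 < ⨆ k, x k := lt_of_lt_of_le ht₀ (le_ciSup hbdd 0)
    have hfix := fixed_of_lim ha hb hr hl0 hxs hlim
    rwa [fixed_unique ha hb hr hl0 hfix] at hlim
  · have hxk : x = fun _ => tstar a b r := funext fun k => by
      simp only [hx, hc, Function.iterate_fixed (fmap_fixed ha hb hr)]
    rw [hxk]; exact tendsto_const_nhds
  · -- decreasing case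
    have hinv : ∀ k, tstar a b r < x k := by
      intro k
      induction k with
      | zero => exact hc
      | succ n ih =>
        rw [hxs]
        calc tstar a b r = fmap a b r (tstar a b r) := (fmap_fixed ha hb hr).symm
          _ < fmap a b r (x n) := fmap_strictMono ha hb hr ht ih
    have hmono : Antitone x := antitone_nat_of_succ_le fun n => by
      rw [hxs]; exact (fmap_lt ha hb hr (hinv n)).le
    have hbdd : BddBelow (Set.range x) := ⟨tstar a b r, by
      rintro _ ⟨k, rfl⟩; exact (hinv k).le⟩
    have hlim := tendsto_atTop_ciInf hmono hbdd
    have hl0 : 0 < ⨅ k, x k := lt_of_lt_of_le ht (le_ciInf fun k => (hinv k).le)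
    have hfix := fixed_of_lim ha hb hr hl0 hxs hlim
    rwa [fixed_unique ha hb hr hl0 hfix] at hlim

end AbstractCF

lemma cfrac_cons (x : ℝ) (l : List ℝ) (hl : l ≠ []) : cfrac (x :: l) = x + (cfrac l)⁻¹ := by
  match l with
  | [] => exact absurd rfl hl
  | b :: t => rfl

lemma range_map_cons (f : ℕ → ℝ) (m : ℕ) :
    (List.range (m + 1)).map f = f 0 :: (List.range m).map (fun i => f (i + 1)) := by
  rw [List.range_succ_eq_map, List.map_cons, List.map_map]
  rfl

lemma range_map_ne_nil (f : ℕ → ℝ) (m : ℕ) : (List.range (m + 1)).map f ≠ [] := by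
  simp [List.range_succ_eq_map]

lemma cfrac_unfold (G : ℕ → ℝ) (n k : ℕ) :
    cfrac ((List.range (n + 2)).map (fun i => G (k + i)))
      = G k + (cfrac ((List.range (n + 1)).map (fun i => G (k + 1 + i))))⁻¹ := by
  rw [range_map_cons]
  have hfe : (fun i => G (k + (i + 1))) = fun i => G (k + 1 + i) := by
    funext i; congr 1 <;> omega
  rw [hfe, cfrac_cons _ _ (range_map_ne_nil _ _), Nat.add_zero]

lemma cfrac_tendsto_aux (G : ℕ → ℝ) (a b r : ℝ) (ha : 0 < a) (hb : 0 < b) (hr : 0 < r)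
    (hG1 : G 1 = a) (hG2 : G 2 = b)
    (hGstep : ∀ k, G (k + 3) = (if k % 2 = 0 then r else r⁻¹) * G (k + 1)) :
    Tendsto (fun n : ℕ => cfrac ((List.range n).map G)) atTop
      (𝓝 (G 0 + (tstar a b r)⁻¹)) := by
  have hr0 : r ≠ 0 := ne_of_gt hr
  have htpos := tstar_pos ha hb hr
  -- alternating scaling of tails
  have haltmap : ∀ n k,
      altscale (if k % 2 = 0 then r else r⁻¹) ((List.range n).map (fun i => G (k + 1 + i)))
        = (List.range n).map (fun i => G (k + 3 + i)) := by
    intro n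
    induction n with
    | zero => intro k; simp [altscale]
    | succ m ih =>
      intro k
      rw [range_map_cons, range_map_cons]
      show _ * _ :: altscale _ _ = _
      have hf1 : (fun i => G (k + 1 + (i + 1))) = fun i => G (k + 2 + i) := by
        funext i; congr 1 <;> omega
      have hf2 : (fun i => G (k + 3 + (i + 1))) = fun i => G ((k + 1) + 3 + i) := by
        funext i; congr 1 <;> omega
      have hinv : (if k % 2 = 0 then r else r⁻¹)⁻¹
          = if (k + 1) % 2 = 0 then r else r⁻¹ := by
        rcases Nat.mod_two_eq_zero_or_one k with h | h <;>
          simp [h, Nat.add_mod, inv_inv]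
      congr 1
      · rw [Nat.add_zero, Nat.add_zero]
        exact (hGstep k).symm
      · rw [hf1, hf2, hinv]
        have := ih (k + 1)
        have hf3 : (fun i => G (k + 1 + 1 + i)) = fun i => G (k + 2 + i) := by
          funext i; congr 1 <;> omega
        rw [hf3] at this
        exact this
  have hscale : ∀ n k,
      cfrac ((List.range n).map (fun i => G (k + 3 + i)))
        = (if k % 2 = 0 then r else r⁻¹) * cfrac ((List.range n).map (fun i => G (k + 1 + i))) := by
    intro n k
    rw [← haltmap n k, cfrac_altscale]
    rcases Nat.mod_two_eq_zero_or_one k with h | h <;> simp [h, hr0]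
  -- the tail sequence S
  set S : ℕ → ℝ := fun n => cfrac ((List.range n).map (fun i => G (1 + i))) with hSdef
  have hrec : ∀ n, S (n + 3) = fmap a b r (S (n + 1)) := by
    intro n
    have e1 : S (n + 3) = G 1 + (cfrac ((List.range (n + 2)).map (fun i => G (2 + i))))⁻¹ := by
      rw [hSdef]
      have := cfrac_unfold G (n + 1) 1
      simpa using this
    have e2 : cfrac ((List.range (n + 2)).map (fun i => G (2 + i)))
        = G 2 + (cfrac ((List.range (n + 1)).map (fun i => G (3 + i))))⁻¹ := by
      have := cfrac_unfold G n 2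
      simpa using this
    have e3 : cfrac ((List.range (n + 1)).map (fun i => G (3 + i)))
        = r * S (n + 1) := by
      have := hscale (n + 1) 0
      simpa [hSdef] using this
    rw [e1, e2, e3, hG1, hG2, fmap]
  have hS1 : S 1 = a := by
    simp [hSdef, List.range_succ, cfrac, hG1]
  have hS2 : S 2 = a + b⁻¹ := by
    have : S 2 = G 1 + (cfrac ((List.range 1).map (fun i => G (2 + i))))⁻¹ := by
      have := cfrac_unfold G 0 1
      simpa [hSdef] using this
    rw [this]
    simp [List.range_succ, cfrac, hG1, hG2]
  have hodd : ∀ k, S (2 * k + 1) = (fmap a b r)^[k] a := by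
    intro k
    induction k with
    | zero => simpa using hS1
    | succ m ih =>
      have : 2 * (m + 1) + 1 = (2 * m) + 3 := by omega
      rw [this, hrec, show (2 * m) + 1 = 2 * m + 1 from rfl, ih,
        ← Function.iterate_succ_apply' (fmap a b r) m a]
  have heven : ∀ k, S (2 * k + 2) = (fmap a b r)^[k] (a + b⁻¹) := by
    intro k
    induction k with
    | zero => simpa using hS2
    | succ m ih =>
      have : 2 * (m + 1) + 2 = (2 * m + 1) + 3 := by omega
      rw [this, hrec, show (2 * m + 1) + 1 = 2 * m + 2 from rfl, ih,
        ← Function.iterate_succ_apply' (fmap a b r) m (a + b⁻¹)]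
  have hu : Tendsto (fun k => S (2 * k + 1)) atTop (𝓝 (tstar a b r)) := by
    rw [funext hodd]; exact iter_tendsto ha hb hr ha
  have hv : Tendsto (fun k => S (2 * k + 2)) atTop (𝓝 (tstar a b r)) := by
    rw [funext heven]
    exact iter_tendsto ha hb hr (by positivity)
  -- the full sequence in terms of S
  have hA : ∀ m, cfrac ((List.range (m + 2)).map G) = G 0 + (S (m + 1))⁻¹ := by
    intro m
    have := cfrac_unfold G m 0
    simpa [hSdef] using this
  set L := G 0 + (tstar a b r)⁻¹ with hL
  have hLu : Tendsto (fun k => G 0 + (S (2 * k + 1))⁻¹) atTop (𝓝 L) :=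
    tendsto_const_nhds.add (hu.inv₀ (ne_of_gt htpos))
  have hLv : Tendsto (fun k => G 0 + (S (2 * k + 2))⁻¹) atTop (𝓝 L) :=
    tendsto_const_nhds.add (hv.inv₀ (ne_of_gt htpos))
  rw [Metric.tendsto_atTop] at hLu hLv ⊢
  intro ε hε
  obtain ⟨N₁, hN₁⟩ := hLu ε hε
  obtain ⟨N₂, hN₂⟩ := hLv ε hε
  refine ⟨2 * N₁ + 2 * N₂ + 2, fun n hn => ?_⟩
  rcases Nat.even_or_odd n with ⟨k, hk⟩ | ⟨k, hk⟩
  · -- n even : n = 2(k-1) + 2, uses odd tail index 2(k-1)+1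
    have hk1 : 1 ≤ k := by omega
    have hn' : n = (2 * (k - 1)) + 2 := by omega
    rw [hn', hA]
    exact hN₁ (k - 1) (by omega)
  · -- n odd : n = (2(k-1)+1) + 2, uses even tail index 2(k-1)+2
    have hk1 : 1 ≤ k := by omega
    have hn' : n = (2 * (k - 1) + 1) + 2 := by omega
    rw [hn', hA]
    have he : (2 * (k - 1) + 1) + 1 = 2 * (k - 1) + 2 := by omega
    rw [he]
    exact hN₂ (k - 1) (by omega)


set_option maxHeartbeats 1000000 in
/-- With δ = x₁ + x₂ + x₃, L′₁ = (x₃δ + x₁x₂)/(x₁x₂),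
L′_{2i} = (x₂²/x₁²)^{i−1}·(x₂/x₁) and L′_{2i+1} = (x₁²/x₂²)^{i−1}·(δx₁x₃/x₂³)
for i ≥ 1, the infinite continued fraction [L′₁, L′₂, L′₃, …] converges to
(δx₃ + x₁² + 2x₁x₂ − x₂² + √((x₁² − x₂² − δx₃)² + 4x₁²x₃δ))/(2x₁x₂). -/
theorem cfrac_cluster_variable_ratio_limit (x₁ x₂ x₃ : ℝ)
    (h₁ : 0 < x₁) (h₂ : 0 < x₂) (h₃ : 0 < x₃) :
    Tendsto
      (fun n : ℕ => cfrac ((List.range n).map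
        (fun i => if i = 0
          then (x₃ * (x₁ + x₂ + x₃) + x₁ * x₂) / (x₁ * x₂)
          else if i % 2 = 1
            then (x₂ ^ 2 / x₁ ^ 2) ^ (i / 2) * (x₂ / x₁)
            else (x₁ ^ 2 / x₂ ^ 2) ^ (i / 2 - 1) * ((x₁ + x₂ + x₃) * x₁ * x₃ / x₂ ^ 3))))
      atTop
      (𝓝 (((x₁ + x₂ + x₃) * x₃ + x₁ ^ 2 + 2 * x₁ * x₂ - x₂ ^ 2 +
          Real.sqrt ((x₁ ^ 2 - x₂ ^ 2 - (x₁ + x₂ + x₃) * x₃) ^ 2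
            + 4 * x₁ ^ 2 * x₃ * (x₁ + x₂ + x₃))) /
        (2 * x₁ * x₂))) := by
  have ha : (0:ℝ) < x₂ / x₁ := by positivity
  have hb : (0:ℝ) < (x₁ + x₂ + x₃) * x₁ * x₃ / x₂ ^ 3 := by positivity
  have hr : (0:ℝ) < x₂ ^ 2 / x₁ ^ 2 := by positivity
  set G : ℕ → ℝ := (fun i => if i = 0
          then (x₃ * (x₁ + x₂ + x₃) + x₁ * x₂) / (x₁ * x₂)
          else if i % 2 = 1
            then (x₂ ^ 2 / x₁ ^ 2) ^ (i / 2) * (x₂ / x₁)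
            else (x₁ ^ 2 / x₂ ^ 2) ^ (i / 2 - 1) * ((x₁ + x₂ + x₃) * x₁ * x₃ / x₂ ^ 3))
    with hGdef
  have hrinv : x₁ ^ 2 / x₂ ^ 2 = (x₂ ^ 2 / x₁ ^ 2)⁻¹ := (inv_div _ _).symm
  have hG1 : G 1 = x₂ / x₁ := by norm_num [hGdef]
  have hG2 : G 2 = (x₁ + x₂ + x₃) * x₁ * x₃ / x₂ ^ 3 := by norm_num [hGdef]
  have hGstep : ∀ k, G (k + 3)
      = (if k % 2 = 0 then x₂ ^ 2 / x₁ ^ 2 else (x₂ ^ 2 / x₁ ^ 2)⁻¹) * G (k + 1) := by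
    intro k
    rcases Nat.even_or_odd k with ⟨m, rfl⟩ | ⟨m, rfl⟩
    · have e0 : ¬(m + m + 3 = 0) := by omega
      have e1 : (m + m + 3) % 2 = 1 := by omega
      have e2 : (m + m + 3) / 2 = m + 1 := by omega
      have e3 : ¬(m + m + 1 = 0) := by omega
      have e4 : (m + m + 1) % 2 = 1 := by omega
      have e5 : (m + m + 1) / 2 = m := by omega
      have e6 : (m + m) % 2 = 0 := by omega
      rw [hGdef]
      simp only [if_neg e0, if_pos e1, e2, if_neg e3, if_pos e4, e5, if_pos e6]
      rw [pow_succ]; ring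
    · have e0 : ¬(2 * m + 1 + 3 = 0) := by omega
      have e1 : ¬((2 * m + 1 + 3) % 2 = 1) := by omega
      have e2 : (2 * m + 1 + 3) / 2 - 1 = m + 1 := by omega
      have e3 : ¬(2 * m + 1 + 1 = 0) := by omega
      have e4 : ¬((2 * m + 1 + 1) % 2 = 1) := by omega
      have e5 : (2 * m + 1 + 1) / 2 - 1 = m := by omega
      have e6 : ¬((2 * m + 1) % 2 = 0) := by omega
      rw [hGdef]
      simp only [if_neg e0, if_neg e1, e2, if_neg e3, if_neg e4, e5, if_neg e6]
      rw [← hrinv, pow_succ]; ring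
  have key := cfrac_tendsto_aux G (x₂ / x₁) ((x₁ + x₂ + x₃) * x₁ * x₃ / x₂ ^ 3)
    (x₂ ^ 2 / x₁ ^ 2) ha hb hr hG1 hG2 hGstep
  have hG0 : G 0 = (x₃ * (x₁ + x₂ + x₃) + x₁ * x₂) / (x₁ * x₂) := by norm_num [hGdef]
  rw [hG0] at key
  -- identify the limit
  have hE0 : (0:ℝ) ≤ (x₁ ^ 2 - x₂ ^ 2 - (x₁ + x₂ + x₃) * x₃) ^ 2
      + 4 * x₁ ^ 2 * x₃ * (x₁ + x₂ + x₃) := by positivity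
  set s := Real.sqrt ((x₁ ^ 2 - x₂ ^ 2 - (x₁ + x₂ + x₃) * x₃) ^ 2
      + 4 * x₁ ^ 2 * x₃ * (x₁ + x₂ + x₃)) with hsdef
  have hs2 : s ^ 2 = (x₁ ^ 2 - x₂ ^ 2 - (x₁ + x₂ + x₃) * x₃) ^ 2
      + 4 * x₁ ^ 2 * x₃ * (x₁ + x₂ + x₃) := Real.sq_sqrt hE0
  have hs0 : 0 ≤ s := Real.sqrt_nonneg _
  set a := x₂ / x₁
  set b := (x₁ + x₂ + x₃) * x₁ * x₃ / x₂ ^ 3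
  set r := x₂ ^ 2 / x₁ ^ 2
  have hsd : Real.sqrt ((a * b * r + r - 1) ^ 2 + 4 * (a * b * r)) = s / x₁ ^ 2 := by
    have harg : (a * b * r + r - 1) ^ 2 + 4 * (a * b * r) = (s / x₁ ^ 2) ^ 2 := by
      rw [div_pow, hs2]
      show ((x₂ / x₁) * ((x₁ + x₂ + x₃) * x₁ * x₃ / x₂ ^ 3) * (x₂ ^ 2 / x₁ ^ 2)
        + x₂ ^ 2 / x₁ ^ 2 - 1) ^ 2 + 4 * ((x₂ / x₁) * ((x₁ + x₂ + x₃) * x₁ * x₃ / x₂ ^ 3)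
        * (x₂ ^ 2 / x₁ ^ 2)) = _
      field_simp
      ring
    rw [harg, Real.sqrt_sq (by positivity)]
  have hts : tstar a b r
      = x₂ * ((x₁ + x₂ + x₃) * x₃ + x₂ ^ 2 - x₁ ^ 2 + s)
        / (2 * x₁ * ((x₁ + x₂ + x₃) * x₃)) := by
    rw [tstar, hsd]
    show ((x₂ / x₁) * ((x₁ + x₂ + x₃) * x₁ * x₃ / x₂ ^ 3) * (x₂ ^ 2 / x₁ ^ 2)
      + x₂ ^ 2 / x₁ ^ 2 - 1 + s / x₁ ^ 2)
      / (2 * (((x₁ + x₂ + x₃) * x₁ * x₃ / x₂ ^ 3) * (x₂ ^ 2 / x₁ ^ 2))) = _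
    field_simp
  have htpos := tstar_pos ha hb hr
  have hw : tstar a b r
      * ((s + x₁ ^ 2 - x₂ ^ 2 - (x₁ + x₂ + x₃) * x₃) / (2 * x₁ * x₂)) = 1 := by
    rw [hts]
    have hd1 : (2 * x₁ * ((x₁ + x₂ + x₃) * x₃)) ≠ 0 := by positivity
    have hd2 : (2 * x₁ * x₂) ≠ 0 := by positivity
    field_simp
    nlinarith [hs2]
  have hinv : (tstar a b r)⁻¹
      = (s + x₁ ^ 2 - x₂ ^ 2 - (x₁ + x₂ + x₃) * x₃) / (2 * x₁ * x₂) :=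
    inv_eq_of_mul_eq_one_right hw
  rw [hinv] at key
  have hfinal : (x₃ * (x₁ + x₂ + x₃) + x₁ * x₂) / (x₁ * x₂)
      + (s + x₁ ^ 2 - x₂ ^ 2 - (x₁ + x₂ + x₃) * x₃) / (2 * x₁ * x₂)
      = ((x₁ + x₂ + x₃) * x₃ + x₁ ^ 2 + 2 * x₁ * x₂ - x₂ ^ 2 + s) / (2 * x₁ * x₂) := by
    field_simp
    ring
  rw [hfinal] at key
  exact key
end
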